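/- arXiv:1605.06889 — 3 statements merged into one kernel-verified Lean document; each statement's English description precedes it below -/
import Mathlib

section
/- Let {R_0,...,R_{r-1}} be a closed-interval partition of a closed interval J and {S_0,...,S_{s-1}} a closed-interval partition of a closed interval K, such that R_j ∩ S_k has positive length for at least one pair (j,k). Then the number of pairs (j,k) with 0 ≤ j ≤ r-1, 0 ≤ k ≤ s-1 and λ(R_j ∩ S_k) > 0 is at most r + s - 1. -/
open MeasureTheory
open scoped Classical

/-- A closed-interval partition: a sequence of `r` closed intervals of positive length such
that the right endpoint of each interval is the left endpoint of the next. -/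
structure ClosedIntervalPartition (r : ℕ) where
  left : Fin r → ℝ
  right : Fin r → ℝ
  len_pos : ∀ j, left j < right j
  chain : ∀ j : Fin r, ∀ h : j.val + 1 < r, right j = left ⟨j.val + 1, h⟩

/-- The `j`-th interval of a closed-interval partition. -/
def ClosedIntervalPartition.interval {r : ℕ} (P : ClosedIntervalPartition r) (j : Fin r) :
    Set ℝ := Set.Icc (P.left j) (P.right j)

lemma CIP.gap {r : ℕ} (P : ClosedIntervalPartition r) (j j' : Fin r) (h : j < j') :
    P.right j ≤ P.left j' := by
  obtain ⟨d, hd⟩ := Nat.exists_eq_add_of_le (Nat.succ_le_of_lt h)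
  induction d generalizing j' with
  | zero =>
    have h1 : j.val + 1 < r := by have := j'.isLt; omega
    have h2 : (⟨j.val + 1, h1⟩ : Fin r) = j' := by
      apply Fin.ext; simp; omega
    rw [P.chain j h1, h2]
  | succ d ih =>
    have h2 : j.val + 1 + d < r := by have := j'.isLt; omega
    have hlt : j < (⟨j.val + 1 + d, h2⟩ : Fin r) := by
      rw [Fin.lt_def]; simp only [Fin.val_mk]; omega
    have h3 := ih ⟨j.val + 1 + d, h2⟩ hlt rfl
    have h4 : (j.val + 1 + d) + 1 < r := by have := j'.isLt; omega
    have h5 : (⟨j.val + 1 + d + 1, h4⟩ : Fin r) = j' := by apply Fin.ext; simp only [Fin.val_mk]; omega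
    have h6 : P.right ⟨j.val + 1 + d, h2⟩ = P.left j' := by
      rw [P.chain ⟨j.val + 1 + d, h2⟩ h4]; exact congrArg P.left h5
    exact h3.trans ((P.len_pos _).le.trans h6.le)

lemma CIP.right_mono {r : ℕ} (P : ClosedIntervalPartition r) {j j' : Fin r} (h : j ≤ j') :
    P.right j ≤ P.right j' := by
  rcases eq_or_lt_of_le h with rfl | h
  · rfl
  · exact (CIP.gap P j j' h).trans (P.len_pos j').le

lemma CIP.ov {r s : ℕ} (P : ClosedIntervalPartition r) (Q : ClosedIntervalPartition s)
    (j : Fin r) (k : Fin s) :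
    0 < volume (P.interval j ∩ Q.interval k) ↔
      max (P.left j) (Q.left k) < min (P.right j) (Q.right k) := by
  rw [ClosedIntervalPartition.interval, ClosedIntervalPartition.interval,
    Set.Icc_inter_Icc, Real.volume_Icc, ENNReal.ofReal_pos, sub_pos]

/-- Lemma 2.1: if `{R_j}` and `{S_k}` are closed-interval partitions with `r` and `s`
intervals respectively, and some `R_j ∩ S_k` has positive length, then the number of pairs
`(j,k)` with `λ(R_j ∩ S_k) > 0` is at most `r + s - 1`. -/
theorem refinement_card_le (r s : ℕ) (P : ClosedIntervalPartition r)
    (Q : ClosedIntervalPartition s)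
    (h : ∃ j k, 0 < volume (P.interval j ∩ Q.interval k)) :
    (Finset.univ.filter fun p : Fin r × Fin s =>
        0 < volume (P.interval p.1 ∩ Q.interval p.2)).card ≤ r + s - 1 := by
  classical
  obtain ⟨j0, k0, -⟩ := h
  have hr : 0 < r := j0.pos
  have hs : 0 < s := k0.pos
  set T : Finset (Fin r × Fin s) := Finset.univ.filter fun p : Fin r × Fin s =>
      0 < volume (P.interval p.1 ∩ Q.interval p.2) with hT
  set f : Fin r × Fin s → Fin r ⊕ Fin s := fun p =>
      if P.right p.1 ≤ Q.right p.2 then Sum.inl p.1 else Sum.inr p.2 with hf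
  -- facts about members of T
  have hmem : ∀ p : Fin r × Fin s, p ∈ T →
      max (P.left p.1) (Q.left p.2) < min (P.right p.1) (Q.right p.2) := by
    intro p hp
    rw [hT, Finset.mem_filter] at hp
    exact (CIP.ov P Q p.1 p.2).mp hp.2
  have fact1 : ∀ p : Fin r × Fin s, p ∈ T → P.right p.1 ≤ Q.right p.2 →
      Q.left p.2 < P.right p.1 := by
    intro p hp hle
    have := hmem p hp
    have h1 : min (P.right p.1) (Q.right p.2) = P.right p.1 := min_eq_left hle
    rw [h1] at this
    exact (le_max_right _ _).trans_lt this
  have fact2 : ∀ p : Fin r × Fin s, p ∈ T → Q.right p.2 < P.right p.1 →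
      P.left p.1 < Q.right p.2 := by
    intro p hp hlt
    have := hmem p hp
    have h1 : min (P.right p.1) (Q.right p.2) = Q.right p.2 := min_eq_right hlt.le
    rw [h1] at this
    exact (le_max_left _ _).trans_lt this
  have hinj : Set.InjOn f T := by
    intro p hp q hq hpq
    simp only [hf] at hpq
    by_cases h1 : P.right p.1 ≤ Q.right p.2 <;> by_cases h2 : P.right q.1 ≤ Q.right q.2 <;>
      simp only [h1, h2, if_true, if_false, if_pos, if_neg, reduceIte] at hpq
    · -- both inl : p.1 = q.1
      have e1 : p.1 = q.1 := Sum.inl.injEq _ _ ▸ hpq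
      have hb1 : Q.left p.2 < P.right p.1 := fact1 p hp h1
      have hb2 : Q.left q.2 < P.right p.1 := e1 ▸ fact1 q hq h2
      have hc1 : P.right p.1 ≤ Q.right p.2 := h1
      have hc2 : P.right p.1 ≤ Q.right q.2 := e1 ▸ h2
      have e2 : p.2 = q.2 := by
        rcases lt_trichotomy p.2 q.2 with hlt | heq | hlt
        · exact absurd ((hc1.trans (CIP.gap Q p.2 q.2 hlt)).trans_lt hb2) (lt_irrefl _)
        · exact heq
        · exact absurd ((hc2.trans (CIP.gap Q q.2 p.2 hlt)).trans_lt hb1) (lt_irrefl _)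
      exact Prod.ext e1 e2
    · exact absurd hpq (by simp)
    · exact absurd hpq (by simp)
    · -- both inr : p.2 = q.2
      have e2 : p.2 = q.2 := Sum.inr.injEq _ _ ▸ hpq
      push_neg at h1 h2
      have hb1 : P.left p.1 < Q.right p.2 := fact2 p hp h1
      have hb2 : P.left q.1 < Q.right p.2 := e2 ▸ fact2 q hq h2
      have hc1 : Q.right p.2 < P.right p.1 := h1
      have hc2 : Q.right p.2 < P.right q.1 := e2 ▸ h2
      have e1 : p.1 = q.1 := by
        rcases lt_trichotomy p.1 q.1 with hlt | heq | hlt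
        · exact absurd (hb2.trans (hc1.trans_le (CIP.gap P p.1 q.1 hlt))) (lt_irrefl _)
        · exact heq
        · exact absurd (hb1.trans (hc2.trans_le (CIP.gap P q.1 p.1 hlt))) (lt_irrefl _)
      exact Prod.ext e1 e2
  set jm : Fin r := ⟨r - 1, by omega⟩ with hjm
  set km : Fin s := ⟨s - 1, by omega⟩ with hkm
  set bad : Fin r ⊕ Fin s := if P.right jm ≤ Q.right km then Sum.inr km else Sum.inl jm with hbad
  have hnotbad : ∀ p ∈ T, f p ≠ bad := by
    intro p hp
    have hp1 : p.1 ≤ jm := by rw [Fin.le_def, hjm]; have := p.1.isLt; simp; omega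
    have hp2 : p.2 ≤ km := by rw [Fin.le_def, hkm]; have := p.2.isLt; simp; omega
    by_cases hc : P.right jm ≤ Q.right km
    · rw [hbad, if_pos hc, hf]
      by_cases h1 : P.right p.1 ≤ Q.right p.2
      · simp [h1]
      · simp only [h1, if_neg, reduceIte, ne_eq, Sum.inr.injEq]
        intro he
        apply h1
        calc P.right p.1 ≤ P.right jm := CIP.right_mono P hp1
          _ ≤ Q.right km := hc
          _ = Q.right p.2 := by rw [he]
    · rw [hbad, if_neg hc, hf]
      push_neg at hc
      by_cases h1 : P.right p.1 ≤ Q.right p.2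
      · simp only [h1, if_pos, reduceIte, ne_eq, Sum.inl.injEq]
        intro he
        have : P.right jm ≤ Q.right km := by
          calc P.right jm = P.right p.1 := by rw [he]
            _ ≤ Q.right p.2 := h1
            _ ≤ Q.right km := CIP.right_mono Q hp2
        exact absurd hc (not_lt.mpr this)
      · simp [h1]
  have hsub : T.image f ⊆ Finset.univ.erase bad := by
    intro x hx
    rw [Finset.mem_image] at hx
    obtain ⟨p, hp, rfl⟩ := hx
    exact Finset.mem_erase.mpr ⟨hnotbad p hp, Finset.mem_univ _⟩
  have hcard : T.card = (T.image f).card := (Finset.card_image_of_injOn hinj).symm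
  calc T.card = (T.image f).card := hcard
    _ ≤ (Finset.univ.erase bad).card := Finset.card_le_card hsub
    _ = Fintype.card (Fin r ⊕ Fin s) - 1 := by
        rw [Finset.card_erase_of_mem (Finset.mem_univ _), Finset.card_univ]
    _ = r + s - 1 := by simp
end

section
/- Let s, m ∈ ℕ with m ≥ 4s+1, let V_1,...,V_m be closed bounded intervals of ℝ, and let c_j, d_j ∈ V_j for each j. Then there is a constant M > 0 depending only on s and m such that ∫_{V_1×⋯×V_m} [∑_{t=1}^m (u_t - c_t)^{2s}(u_t - d_t)^{2s}]^{-1} du_1⋯du_m ≤ M·(max{λ(V_1),...,λ(V_m)})^{m-4s}. -/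
/-!
Let `g(u) = maxₜ min(|uₜ - cₜ|, |uₜ - dₜ|)`. Each summand `(uₜ - cₜ)^{2s}(uₜ - dₜ)^{2s}` is at
least `min(|uₜ - cₜ|, |uₜ - dₜ|)^{4s}`, so the integrand is at most `g(u)^{-4s}`. The part of the
box where `g ≤ r` is a product of `m` sets of length at most `min(L, 4r)`, `L` the longest side, so
its volume is at most `L^{m-4s-1} (4r)^{4s+1}`. On the dyadic shells `L/2^{k+1} < g ≤ L/2^k` the
integral is therefore `O(L^{m-4s} 2^{-k})`, because the exponent `4s+1` of the volume bound exceeds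
the exponent `4s` of the singularity; summing the geometric series gives the bound, the set `g = 0`
being null.
-/

open MeasureTheory
open scoped ENNReal

theorem min_abs_pow_le_pow_mul_pow (x y : ℝ) (n : ℕ) :
    min |x| |y| ^ (4 * n) ≤ x ^ (2 * n) * y ^ (2 * n) := by
  calc min |x| |y| ^ (4 * n) = (min |x| |y| ^ 2) ^ (2 * n) := by rw [← pow_mul]; ring_nf
    _ ≤ (|x| * |y|) ^ (2 * n) := by
        gcongr
        rw [sq]
        exact mul_le_mul (min_le_left _ _) (min_le_right _ _) (le_min (abs_nonneg x) (abs_nonneg y))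
          (abs_nonneg x)
    _ = x ^ (2 * n) * y ^ (2 * n) := by
        rw [mul_pow, (even_two_mul n).pow_abs, (even_two_mul n).pow_abs]

theorem Real.volume_setOf_min_abs_sub_le (c d r : ℝ) :
    volume {x : ℝ | min |x - c| |x - d| ≤ r} ≤ ENNReal.ofReal (4 * r) := by
  have hsplit :
      {x : ℝ | min |x - c| |x - d| ≤ r} = Metric.closedBall c r ∪ Metric.closedBall d r := by
    ext x
    simp [Real.dist_eq]
  calc volume {x : ℝ | min |x - c| |x - d| ≤ r}
      ≤ volume (Metric.closedBall c r) + volume (Metric.closedBall d r) :=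
        hsplit ▸ measure_union_le _ _
    _ = ENNReal.ofReal (4 * r) := by
      rcases le_or_gt 0 r with hr | hr
      · rw [Real.volume_closedBall, Real.volume_closedBall,
          ← ENNReal.ofReal_add (by positivity) (by positivity)]
        ring_nf
      · simp [Metric.closedBall_eq_empty.2 hr, ENNReal.ofReal_of_nonpos (by linarith : 4 * r ≤ 0)]

theorem min_pow_le_pow_mul_pow {M : Type*} [CommMonoid M] [LinearOrder M] [MulLeftMono M]
    [MulRightMono M] (x y : M) {k n : ℕ} (hkn : k ≤ n) : min x y ^ n ≤ x ^ (n - k) * y ^ k := by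
  rw [← Nat.sub_add_cancel hkn, pow_add, Nat.add_sub_cancel]
  exact mul_le_mul' (pow_le_pow_left' (min_le_left x y) _) (pow_le_pow_left' (min_le_right x y) _)

theorem exists_mem_Ioc_div_two_pow {R y : ℝ} (hy : 0 < y) (hyR : y ≤ R) :
    ∃ k : ℕ, y ∈ Set.Ioc (R / 2 ^ (k + 1)) (R / 2 ^ k) := by
  obtain ⟨k, hk, hk'⟩ := exists_nat_pow_near ((one_le_div hy).2 hyR) one_lt_two
  exact ⟨k, (div_lt_iff₀ (by positivity)).2 (by rwa [div_lt_iff₀ hy, mul_comm] at hk'),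
    (le_div_iff₀ (by positivity)).2 (by rwa [le_div_iff₀ hy, mul_comm] at hk)⟩

theorem ENNReal.inv_pow_mul_pow {ρ : ℝ≥0∞} (h0 : ρ ≠ 0) (htop : ρ ≠ ∞) {β α : ℕ}
    (hβα : β ≤ α) : (ρ ^ β)⁻¹ * ρ ^ α = ρ ^ (α - β) := by
  rw [← Nat.sub_add_cancel hβα, pow_add, Nat.add_sub_cancel, mul_left_comm,
    ENNReal.inv_mul_cancel (pow_ne_zero _ h0) (pow_ne_top htop), mul_one]

theorem setLIntegral_shell_le {X : Type*} [MeasurableSpace X] {μ : Measure X} {S : Set X}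
    {f : X → ℝ≥0∞} {Y : X → ℝ} {A : ℝ≥0∞} {R : ℝ} {α β : ℕ} (hβα : β < α) (hR : 0 < R)
    (hf : ∀ x ∈ S, f x ≤ (ENNReal.ofReal (Y x ^ β))⁻¹)
    (hμ : ∀ r, 0 ≤ r → μ (S ∩ {x | Y x ≤ r}) ≤ A * ENNReal.ofReal r ^ α) (k : ℕ) :
    ∫⁻ x in S ∩ {x | Y x ∈ Set.Ioc (R / 2 ^ (k + 1)) (R / 2 ^ k)}, f x ∂μ
      ≤ 2 ^ β * A * ENNReal.ofReal R ^ (α - β) * 2⁻¹ ^ k := by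
  have hρ : ENNReal.ofReal (R / 2 ^ k) = ENNReal.ofReal R * 2⁻¹ ^ k := by
    rw [ENNReal.ofReal_div_of_pos (by positivity), ENNReal.ofReal_pow zero_le_two,
      ENNReal.ofReal_ofNat, div_eq_mul_inv, ENNReal.inv_pow]
  have hρ' : ENNReal.ofReal (R / 2 ^ (k + 1)) = ENNReal.ofReal (R / 2 ^ k) * 2⁻¹ := by
    rw [pow_succ, ← div_div, ENNReal.ofReal_div_of_pos two_pos, ENNReal.ofReal_ofNat,
      div_eq_mul_inv]
  set shell := S ∩ {x | Y x ∈ Set.Ioc (R / 2 ^ (k + 1)) (R / 2 ^ k)}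
  set ρ := ENNReal.ofReal (R / 2 ^ k)
  calc ∫⁻ x in shell, f x ∂μ ≤ ∫⁻ _ in shell, ((ρ * 2⁻¹) ^ β)⁻¹ ∂μ := by
        refine setLIntegral_mono measurable_const fun x hx => (hf x hx.1).trans ?_
        rw [← hρ', ← ENNReal.ofReal_pow (by positivity)]
        gcongr
        exact hx.2.1.le
    _ = ((ρ * 2⁻¹) ^ β)⁻¹ * μ shell := setLIntegral_const _ _
    _ ≤ ((ρ * 2⁻¹) ^ β)⁻¹ * (A * ρ ^ α) := by
        gcongr
        exact (measure_mono fun x hx => Set.mem_inter hx.1 hx.2.2).trans (hμ _ (by positivity))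
    _ = 2 ^ β * A * ((ρ ^ β)⁻¹ * ρ ^ α) := by
        rw [mul_pow, ENNReal.mul_inv (by simp) (by simp), ← ENNReal.inv_pow, inv_inv]
        ring
    _ = 2 ^ β * A * ρ ^ (α - β) := by
        rw [ENNReal.inv_pow_mul_pow (by simp; positivity) ENNReal.ofReal_ne_top hβα.le]
    _ ≤ 2 ^ β * A * ENNReal.ofReal R ^ (α - β) * 2⁻¹ ^ k := by
        rw [hρ, mul_pow, ← mul_assoc]
        exact mul_le_mul_right (pow_le_of_le_one zero_le (pow_le_one₀ zero_le
          (ENNReal.inv_le_one.2 one_le_two)) (by omega)) _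

theorem lintegral_le_of_measure_sublevel_le {X : Type*} [MeasurableSpace X] {μ : Measure X}
    {S : Set X} {f : X → ℝ≥0∞} {Y : X → ℝ} {A : ℝ≥0∞} {R : ℝ} {α β : ℕ} (hβα : β < α)
    (hYR : ∀ x ∈ S, Y x ≤ R) (hf : ∀ x ∈ S, f x ≤ (ENNReal.ofReal (Y x ^ β))⁻¹)
    (hμ : ∀ r, 0 ≤ r → μ (S ∩ {x | Y x ≤ r}) ≤ A * ENNReal.ofReal r ^ α) :
    ∫⁻ x in S, f x ∂μ ≤ 2 ^ (β + 1) * A * ENNReal.ofReal R ^ (α - β) := by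
  have hnull : μ (S ∩ {x | Y x ≤ 0}) = 0 :=
    le_antisymm ((hμ 0 le_rfl).trans (by simp [(Nat.zero_le β).trans_lt hβα |>.ne'])) bot_le
  rcases le_or_gt R 0 with hR | hR
  · rw [setLIntegral_measure_zero _ _
      (measure_mono_null (fun x hx => Set.mem_inter hx ((hYR x hx).trans hR)) hnull)]
    exact zero_le
  set shell : ℕ → Set X := fun k => S ∩ {x | Y x ∈ Set.Ioc (R / 2 ^ (k + 1)) (R / 2 ^ k)}
  have hcover : S ⊆ (S ∩ {x | Y x ≤ 0}) ∪ ⋃ k, shell k := by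
    intro x hx
    rcases le_or_gt (Y x) 0 with hY | hY
    · exact Or.inl ⟨hx, hY⟩
    · obtain ⟨k, hk⟩ := exists_mem_Ioc_div_two_pow hY (hYR x hx)
      exact Or.inr (Set.mem_iUnion.2 ⟨k, hx, hk⟩)
  calc ∫⁻ x in S, f x ∂μ ≤ ∫⁻ x in (S ∩ {x | Y x ≤ 0}) ∪ ⋃ k, shell k, f x ∂μ :=
        lintegral_mono_set hcover
    _ ≤ ∫⁻ x in S ∩ {x | Y x ≤ 0}, f x ∂μ + ∫⁻ x in ⋃ k, shell k, f x ∂μ :=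
        lintegral_union_le _ _ _
    _ = ∫⁻ x in ⋃ k, shell k, f x ∂μ := by rw [setLIntegral_measure_zero _ _ hnull, zero_add]
    _ ≤ ∑' k, ∫⁻ x in shell k, f x ∂μ := lintegral_iUnion_le _ _
    _ ≤ ∑' k, 2 ^ β * A * ENNReal.ofReal R ^ (α - β) * 2⁻¹ ^ k :=
        ENNReal.tsum_le_tsum (setLIntegral_shell_le hβα hR hf hμ)
    _ = 2 ^ (β + 1) * A * ENNReal.ofReal R ^ (α - β) := by
        rw [ENNReal.tsum_mul_left, ENNReal.tsum_geometric, ENNReal.one_sub_inv_two, inv_inv]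
        ring

/-- The sup-norm distance from `u` to the `2 ^ card ι` points whose coordinates lie in
`{c t, d t}`. -/
noncomputable def cornerDist {ι : Type*} [Fintype ι] [Nonempty ι] (c d u : ι → ℝ) : ℝ :=
  Finset.univ.sup' Finset.univ_nonempty fun t => min |u t - c t| |u t - d t|

section cornerDist

variable {ι : Type*} [Fintype ι] [Nonempty ι]

theorem cornerDist_pow_le_sum (c d u : ι → ℝ) (n : ℕ) :
    cornerDist c d u ^ (4 * n) ≤ ∑ t, (u t - c t) ^ (2 * n) * (u t - d t) ^ (2 * n) := by
  obtain ⟨t, -, hmax⟩ :=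
    Finset.univ.exists_mem_eq_sup' Finset.univ_nonempty fun t => min |u t - c t| |u t - d t|
  rw [cornerDist, hmax]
  refine (min_abs_pow_le_pow_mul_pow _ _ n).trans (Finset.single_le_sum
    (f := fun i => (u i - c i) ^ (2 * n) * (u i - d i) ^ (2 * n)) (fun i _ => ?_)
    (Finset.mem_univ t))
  exact (pow_nonneg (le_min (abs_nonneg _) (abs_nonneg _)) _).trans
    (min_abs_pow_le_pow_mul_pow _ _ n)

theorem cornerDist_le {a b c d u : ι → ℝ} {L : ℝ} (hc : ∀ j, c j ∈ Set.Icc (a j) (b j))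
    (hu : u ∈ Set.univ.pi fun j => Set.Icc (a j) (b j)) (hL : ∀ j, b j - a j ≤ L) :
    cornerDist c d u ≤ L := by
  refine Finset.sup'_le _ _ fun t _ => (min_le_left _ _).trans ?_
  have hut : u t ∈ Set.Icc (a t) (b t) := hu t (Set.mem_univ t)
  exact (abs_le.2 ⟨by linarith [(hc t).2, hut.1], by linarith [(hc t).1, hut.2]⟩).trans (hL t)

theorem pi_Icc_inter_setOf_cornerDist_le (a b c d : ι → ℝ) (r : ℝ) :
    (Set.univ.pi fun j => Set.Icc (a j) (b j)) ∩ {u | cornerDist c d u ≤ r}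
      = Set.univ.pi fun j => Set.Icc (a j) (b j) ∩ {x | min |x - c j| |x - d j| ≤ r} := by
  ext u
  simp only [Set.mem_inter_iff, Set.mem_pi, Set.mem_univ, true_implies, Set.mem_ofPred_eq,
    cornerDist, Finset.sup'_le_iff, Finset.mem_univ, forall_and]

theorem volume_pi_Icc_inter_setOf_cornerDist_le (a b c d : ι → ℝ) {L : ℝ}
    (hL : ∀ j, b j - a j ≤ L) {k : ℕ} (hk : k ≤ Fintype.card ι) (r : ℝ) :
    volume ((Set.univ.pi fun j => Set.Icc (a j) (b j)) ∩ {u | cornerDist c d u ≤ r})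
      ≤ ENNReal.ofReal L ^ (Fintype.card ι - k) * 4 ^ k * ENNReal.ofReal r ^ k := by
  rw [pi_Icc_inter_setOf_cornerDist_le, volume_pi_pi]
  calc ∏ j, volume (Set.Icc (a j) (b j) ∩ {x | min |x - c j| |x - d j| ≤ r})
      ≤ min (ENNReal.ofReal L) (4 * ENNReal.ofReal r) ^ Fintype.card ι := by
        refine Finset.prod_le_pow_card _ _ _ fun j _ => le_min ?_ ?_
        · calc _ ≤ volume (Set.Icc (a j) (b j)) := measure_mono Set.inter_subset_left
            _ ≤ _ := by rw [Real.volume_Icc]; exact ENNReal.ofReal_le_ofReal (hL j)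
        · calc _ ≤ volume {x | min |x - c j| |x - d j| ≤ r} := measure_mono Set.inter_subset_right
            _ ≤ _ := by
              rw [← ENNReal.ofReal_ofNat 4, ← ENNReal.ofReal_mul (by norm_num)]
              exact Real.volume_setOf_min_abs_sub_le _ _ _
    _ ≤ _ := by rw [mul_assoc, ← mul_pow]; exact min_pow_le_pow_mul_pow _ _ hk

end cornerDist

/-- Lemma 2.3: if `m ≥ 4s+1` there is `M > 0`, depending on `s` and `m` only, such that for
all closed bounded intervals `V_j = [a_j, b_j]` and points `c_j, d_j ∈ V_j`,
`∫_{V_1 × ⋯ × V_m} (∑_t (u_t-c_t)^{2s}(u_t-d_t)^{2s})⁻¹ du ≤ M (max_j λ(V_j))^{m-4s}`. -/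
theorem integral_inv_sum_le (s m : ℕ) (hm : 4 * s + 1 ≤ m) :
    ∃ M > (0 : ℝ), ∀ a b c d : Fin m → ℝ, (∀ j, a j ≤ b j) →
      (∀ j, c j ∈ Set.Icc (a j) (b j)) → (∀ j, d j ∈ Set.Icc (a j) (b j)) →
      ∫⁻ u : Fin m → ℝ in Set.univ.pi fun j => Set.Icc (a j) (b j),
          (ENNReal.ofReal (∑ t, (u t - c t) ^ (2 * s) * (u t - d t) ^ (2 * s)))⁻¹
        ≤ ENNReal.ofReal (M * (⨆ j, (b j - a j)) ^ (m - 4 * s)) := by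
  refine ⟨8 ^ (4 * s + 1), by positivity, fun a b c d hab hc _ => ?_⟩
  have : Nonempty (Fin m) := ⟨⟨0, by omega⟩⟩
  set L := ⨆ j, (b j - a j)
  have hL : ∀ j, b j - a j ≤ L := le_ciSup (Finite.bddAbove_range _)
  have hL0 : 0 ≤ L := (sub_nonneg.2 (hab ⟨0, by omega⟩)).trans (hL _)
  calc _ ≤ 2 ^ (4 * s + 1) * (ENNReal.ofReal L ^ (m - (4 * s + 1)) * 4 ^ (4 * s + 1))
        * ENNReal.ofReal L ^ (4 * s + 1 - 4 * s) :=
        lintegral_le_of_measure_sublevel_le (Nat.lt_succ_self _)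
          (fun u hu => cornerDist_le hc hu hL)
          (fun u _ => ENNReal.inv_le_inv.2
            (ENNReal.ofReal_le_ofReal (cornerDist_pow_le_sum c d u s)))
          (fun r _ => by
            simpa using volume_pi_Icc_inter_setOf_cornerDist_le a b c d hL (by simpa using hm) r)
    _ = ENNReal.ofReal (8 ^ (4 * s + 1) * L ^ (m - 4 * s)) := by
        rw [ENNReal.ofReal_mul (by positivity), ENNReal.ofReal_pow hL0,
          ENNReal.ofReal_pow (by norm_num), ENNReal.ofReal_ofNat,
          show m - 4 * s = m - (4 * s + 1) + 1 by omega,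
          show 4 * s + 1 - 4 * s = 1 by omega,
          show (8 : ℝ≥0∞) ^ (4 * s + 1) = 2 ^ (4 * s + 1) * 4 ^ (4 * s + 1) by
            rw [← mul_pow]; norm_num]
        ring
end

section
/- Let s, m ∈ ℕ with m ≥ 4s+1, let c > 0, and let α ∈ ℝ. Then there is a constant G > 0 such that for all x ∈ ℝ with 0 < |x - α| sufficiently small (specifically |x-α| < πδ/c for suitable δ ∈ (0,1/2)), ∫_{[-c,c]^m} [∑_{j=1}^m sin^{4s}(u_j(x-α))]^{-1} du_1⋯du_m ≤ G/(x-α)^{4s}. -/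
/-! On the cube, `|u_j (x - α)| ≤ π / 2`, so Jordan's inequality `|sin θ| ≥ 2|θ|/π` applied to the
largest coordinate bounds the sum below by `(2 |x - α| ‖u‖ / π) ^ (4s)`, with `‖u‖` the sup norm.
The integral is therefore at most `(π / (2 |x - α|)) ^ (4s) ∫_{cube} ‖u‖ ^ (-4s) du`, and the
last integral is finite because `‖u‖ ^ (-4s)` is locally integrable when `4s < m`. -/

open MeasureTheory

theorem Pi.exists_norm_eq_abs {ι : Type*} [Fintype ι] [Nonempty ι] (u : ι → ℝ) :
    ∃ j, ‖u‖ = |u j| := by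
  obtain ⟨j, -, hj⟩ := Finset.exists_mem_eq_sup Finset.univ Finset.univ_nonempty
    fun b => ‖u b‖₊
  refine ⟨j, ?_⟩
  rw [Pi.norm_def, hj, coe_nnnorm, Real.norm_eq_abs]

theorem pow_mul_norm_le_sum_sin_pow {ι : Type*} [Fintype ι] [Nonempty ι] {k : ℕ}
    (hk : Even k) (u : ι → ℝ) {t : ℝ} (hu : ∀ j, |u j * t| ≤ Real.pi / 2) :
    (2 / Real.pi * |t| * ‖u‖) ^ k ≤ ∑ j, Real.sin (u j * t) ^ k := by
  obtain ⟨j, hj⟩ := Pi.exists_norm_eq_abs u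
  calc (2 / Real.pi * |t| * ‖u‖) ^ k = (2 / Real.pi * |u j * t|) ^ k := by
        rw [hj, abs_mul]; ring
    _ ≤ |Real.sin (u j * t)| ^ k := by gcongr; exact Real.mul_abs_le_abs_sin (hu j)
    _ = Real.sin (u j * t) ^ k := hk.pow_abs _
    _ ≤ ∑ j, Real.sin (u j * t) ^ k :=
        Finset.single_le_sum (f := fun i => Real.sin (u i * t) ^ k)
          (fun i _ => hk.pow_nonneg _) (Finset.mem_univ j)

theorem IsCompact.setLIntegral_inv_enorm_pow_lt_top {E : Type*} [NormedAddCommGroup E]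
    [NormedSpace ℝ E] [FiniteDimensional ℝ E] [MeasurableSpace E] [BorelSpace E]
    {μ : Measure E} [μ.IsAddHaarMeasure] {K : Set E} (hK : IsCompact K) {n : ℕ}
    (hn : n < Module.finrank ℝ E) :
    ∫⁻ x in K, (‖x‖ₑ ^ n)⁻¹ ∂μ < ⊤ := by
  have : Nontrivial E := Module.nontrivial_of_finrank_pos (R := ℝ) (by omega)
  have hint : IntegrableOn (fun x : E => ‖x‖ ^ (-(n : ℝ))) K μ :=
    (locallyIntegrable_of_norm_le_rpow (C := 1) (by omega) (α := n) (by exact_mod_cast hn)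
      (Filter.Eventually.of_forall fun x => by
        rw [one_mul, Real.norm_of_nonneg (by positivity)])
      (measurable_norm.pow_const _).aestronglyMeasurable).integrableOn_isCompact hK
  refine lt_of_eq_of_lt (setLIntegral_congr_fun_ae hK.measurableSet ?_) hint.2
  -- At the origin the real power is `0 ^ (-n) = 0` for `n > 0`, while `(‖0‖ₑ ^ n)⁻¹ = ⊤`.
  filter_upwards [Measure.ae_ne μ 0] with x hx _
  rw [Real.rpow_neg (norm_nonneg x), Real.rpow_natCast, Real.enorm_of_nonneg (by positivity),
    ENNReal.ofReal_inv_of_pos (by positivity), ENNReal.ofReal_pow (norm_nonneg x),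
    ofReal_norm]

theorem inv_ofReal_sum_sin_pow_le {ι : Type*} [Fintype ι] [Nonempty ι] {k : ℕ}
    (hk : Even k) (u : ι → ℝ) {t : ℝ} (ht : t ≠ 0) (hu : ∀ j, |u j * t| ≤ Real.pi / 2) :
    (ENNReal.ofReal (∑ j, Real.sin (u j * t) ^ k))⁻¹ ≤
      ENNReal.ofReal ((Real.pi / 2 / |t|) ^ k) * (‖u‖ₑ ^ k)⁻¹ := by
  calc (ENNReal.ofReal (∑ j, Real.sin (u j * t) ^ k))⁻¹
      ≤ (ENNReal.ofReal ((2 / Real.pi * |t|) ^ k) * ‖u‖ₑ ^ k)⁻¹ := by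
        rw [← ofReal_norm, ← ENNReal.ofReal_pow (norm_nonneg u),
          ← ENNReal.ofReal_mul (by positivity), ← mul_pow]
        exact ENNReal.inv_le_inv.mpr (ENNReal.ofReal_le_ofReal
          (pow_mul_norm_le_sum_sin_pow hk u hu))
    _ = ENNReal.ofReal ((Real.pi / 2 / |t|) ^ k) * (‖u‖ₑ ^ k)⁻¹ := by
        rw [ENNReal.mul_inv (Or.inr (by simp)) (Or.inl ENNReal.ofReal_ne_top),
          ← ENNReal.ofReal_inv_of_pos (by positivity), ← inv_pow]
        congr 3
        field_simp

/-- For `m ≥ 4s+1`, `c > 0` and `α ∈ ℝ`, there are `δ ∈ (0,1/2)` and `G > 0` such that for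
all `x ≠ α` with `|x-α| < πδ/c`,
`∫_{[-c,c]^m} (∑_j sin^{4s}(u_j(x-α)))⁻¹ du ≤ G/(x-α)^{4s}`. -/
theorem integral_inv_sum_sin_le (s m : ℕ) (hm : 4 * s + 1 ≤ m) (c : ℝ) (hc : 0 < c)
    (α : ℝ) :
    ∃ δ : ℝ, 0 < δ ∧ δ < 1 / 2 ∧ ∃ G > (0 : ℝ), ∀ x : ℝ, x ≠ α →
      |x - α| < Real.pi * δ / c →
      ∫⁻ u : Fin m → ℝ in Set.univ.pi fun _ => Set.Icc (-c) c,
          (ENNReal.ofReal (∑ j, Real.sin (u j * (x - α)) ^ (4 * s)))⁻¹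
        ≤ ENNReal.ofReal (G / (x - α) ^ (4 * s)) := by
  have : Nonempty (Fin m) := Fin.pos_iff_nonempty.mp (by omega)
  have hk : Even (4 * s) := ⟨2 * s, by ring⟩
  set cube := Set.univ.pi fun _ : Fin m => Set.Icc (-c) c
  set K := ∫⁻ u in cube, (‖u‖ₑ ^ (4 * s))⁻¹
  have hK : K ≠ ⊤ :=
    ((isCompact_univ_pi fun _ => isCompact_Icc).setLIntegral_inv_enorm_pow_lt_top
      (by rw [Module.finrank_fin_fun]; omega)).ne
  refine ⟨1 / 4, by norm_num, by norm_num, (Real.pi / 2) ^ (4 * s) * K.toReal + 1,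
    by positivity, fun x hx hxα => ?_⟩
  set t := x - α
  have hsmall : ∀ u ∈ cube, ∀ j, |u j * t| ≤ Real.pi / 2 := fun u hu j => by
    have huj : |u j| ≤ c := abs_le.mpr (hu j (Set.mem_univ j))
    rw [abs_mul]
    calc |u j| * |t| ≤ c * (Real.pi * (1 / 4) / c) := by gcongr
      _ ≤ Real.pi / 2 := by field_simp; linarith [Real.pi_pos]
  calc ∫⁻ u in cube, (ENNReal.ofReal (∑ j, Real.sin (u j * t) ^ (4 * s)))⁻¹
      ≤ ∫⁻ u in cube, ENNReal.ofReal ((Real.pi / 2 / |t|) ^ (4 * s)) * (‖u‖ₑ ^ (4 * s))⁻¹ :=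
        setLIntegral_mono' (MeasurableSet.univ_pi fun _ => measurableSet_Icc) fun u hu =>
          inv_ofReal_sum_sin_pow_le hk u (sub_ne_zero.mpr hx) (hsmall u hu)
    _ = ENNReal.ofReal ((Real.pi / 2 / |t|) ^ (4 * s)) * K :=
        lintegral_const_mul' _ _ ENNReal.ofReal_ne_top
    _ ≤ ENNReal.ofReal (((Real.pi / 2) ^ (4 * s) * K.toReal + 1) / t ^ (4 * s)) := by
        rw [← ENNReal.ofReal_toReal hK, ← ENNReal.ofReal_mul (by positivity),
          ENNReal.toReal_ofReal ENNReal.toReal_nonneg, div_pow, ← hk.pow_abs t,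
          div_mul_eq_mul_div]
        gcongr
        linarith
end
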